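/- arXiv:2106.05512 — 4 statements merged into one kernel-verified Lean document; each statement's English description precedes it below -/
import Mathlib

section
/- Let (μ^ε)_{ε>0} be finite Borel measures on C_d such that for every C ∈ (0,∞), limsup_{ε→0} ε² log ∫_{C_d} exp(C ε^{-2}(1+‖η‖_*)) μ^ε(dη) < ∞. Let c_R, c_A ∈ (0,∞) and for each ε > 0 let R̄^ε, Ā^ε: C_d → ℝ be Borel measurable with R̄^ε(η) ≤ c_R(1+‖η‖_*) and |Ā^ε(η)| ≤ c_A(1+‖η‖_*) for all η ∈ C_d and all ε > 0. Then limsup_{ε→0} ε² log ∫_{C_d} exp(ε^{-1} Ā^ε(η) + ε^{-2} R̄^ε(η)) μ^ε(dη) ≤ limsup_{ε→0} ε² log ∫_{C_d} exp(ε^{-2} R̄^ε(η)) μ^ε(dη). -/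
/-!
Split the integrand according to whether `‖η‖ ≤ K`. On the ball, `ε⁻¹ Ā^ε ≤ ε⁻¹ c_A (1 + K)` only
contributes a factor that is negligible at speed `ε⁻²`. Off the ball the whole exponent is at most
`-K ε⁻² + C ε⁻² (1 + ‖η‖)` with `C = c_R + c_A + 1`, so by the exponential moment bound this
part has growth rate at most `-K + M` with `M < ∞`. As the growth rate of a sum is the larger of
the two growth rates, the left-hand side is at most `max (rhs) (-K + M)` for every `K`; let
`K → ∞`.
-/

open MeasureTheory Set Filter Topology
open scoped ENNReal

noncomputable section

/-- `C([0,T]; ℝ^d)` with the supremum norm. -/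
abbrev Pth (T : ℝ) (p : ℕ) := C(Set.Icc (0:ℝ) T, EuclideanSpace ℝ (Fin p))

theorem EReal.le_of_forall_le_max_neg_add {a b M : EReal} (hM : M ≠ ⊤)
    (h : ∀ K : ℝ, a ≤ max b ((-K : ℝ) + M)) : a ≤ b := by
  have hM_bot : Tendsto (fun K : ℝ => ((-K : ℝ) : EReal) + M) atTop (𝓝 ⊥) := by
    induction M with
    | bot => simp
    | coe m =>
      simp only [← EReal.coe_add]
      exact EReal.tendsto_coe_nhds_bot_iff.2
        (tendsto_atBot_add_const_right _ m tendsto_neg_atTop_atBot)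
    | top => exact absurd rfl hM
  simpa using ge_of_tendsto' (tendsto_const_nhds.max hM_bot) h

def expGrowthRate (x : ℝ → ℝ≥0∞) : EReal :=
  limsup (fun ε => ((ε ^ 2 : ℝ) : EReal) * ENNReal.log (x ε)) (𝓝[>] 0)

theorem expGrowthRate_mono {x y : ℝ → ℝ≥0∞} (h : ∀ᶠ ε in 𝓝[>] 0, x ε ≤ y ε) :
    expGrowthRate x ≤ expGrowthRate y :=
  limsup_le_limsup (h.mono fun _ hε =>
    mul_le_mul_of_nonneg_left (ENNReal.log_monotone hε) (EReal.coe_nonneg.2 (sq_nonneg _)))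

theorem expGrowthRate_max (x y : ℝ → ℝ≥0∞) :
    expGrowthRate (fun ε => max (x ε) (y ε)) = max (expGrowthRate x) (expGrowthRate y) := by
  have hmono : ∀ ε : ℝ, Monotone fun t : ℝ≥0∞ => ((ε ^ 2 : ℝ) : EReal) * ENNReal.log t :=
    fun ε _ _ h => mul_le_mul_of_nonneg_left (ENNReal.log_monotone h)
      (EReal.coe_nonneg.2 (sq_nonneg _))
  simp only [expGrowthRate, (hmono _).map_max]
  exact limsup_max

theorem expGrowthRate_ofReal_exp_mul_le {a : ℝ → ℝ} {r : ℝ}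
    (ha : Tendsto (fun ε => ε ^ 2 * a ε) (𝓝[>] 0) (𝓝 r)) (x : ℝ → ℝ≥0∞) :
    expGrowthRate (fun ε => ENNReal.ofReal (Real.exp (a ε)) * x ε) ≤ r + expGrowthRate x := by
  have hsplit : ∀ ε : ℝ, ((ε ^ 2 : ℝ) : EReal) * ENNReal.log (ENNReal.ofReal (Real.exp (a ε)) * x ε)
      = ((ε ^ 2 * a ε : ℝ) : EReal) + ((ε ^ 2 : ℝ) : EReal) * ENNReal.log (x ε) := by
    intro ε
    rw [ENNReal.log_mul_add, ENNReal.log_ofReal_of_pos (Real.exp_pos _), Real.log_exp,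
      EReal.left_distrib_of_nonneg_of_ne_top (EReal.coe_nonneg.2 (sq_nonneg _))
        (EReal.coe_ne_top _)]
    rfl
  have hlim : limsup (fun ε => ((ε ^ 2 * a ε : ℝ) : EReal)) (𝓝[>] 0) = r :=
    (EReal.tendsto_coe.2 ha).limsup_eq
  simp only [expGrowthRate, hsplit]
  refine (EReal.limsup_add_le ?_ ?_).trans_eq (by rw [hlim])
  · exact Or.inl (hlim ▸ EReal.coe_ne_bot r)
  · exact Or.inl (hlim ▸ EReal.coe_ne_top r)

theorem expGrowthRate_add_le (x y : ℝ → ℝ≥0∞) :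
    expGrowthRate (fun ε => x ε + y ε) ≤ max (expGrowthRate x) (expGrowthRate y) := by
  have hlog2 : Tendsto (fun ε : ℝ => ε ^ 2 * Real.log 2) (𝓝[>] 0) (𝓝 0) := by
    have hcont : Continuous fun ε : ℝ => ε ^ 2 * Real.log 2 := by fun_prop
    exact (hcont.tendsto' 0 0 (by simp)).mono_left nhdsWithin_le_nhds
  calc expGrowthRate (fun ε => x ε + y ε)
      ≤ expGrowthRate (fun ε => ENNReal.ofReal (Real.exp (Real.log 2)) * max (x ε) (y ε)) := by
        refine expGrowthRate_mono (Eventually.of_forall fun ε => ?_)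
        rw [Real.exp_log two_pos, ENNReal.ofReal_ofNat, two_mul]
        exact add_le_add (le_max_left _ _) (le_max_right _ _)
    _ ≤ max (expGrowthRate x) (expGrowthRate y) := by
        simpa only [EReal.coe_zero, zero_add, expGrowthRate_max] using
          expGrowthRate_ofReal_exp_mul_le hlog2 fun ε => max (x ε) (y ε)

theorem Real.exp_mul_add_sq_mul_le {t s a r cA cR : ℝ} (K : ℝ) (ht : 1 ≤ t) (hs : 0 ≤ s)
    (ha : |a| ≤ cA * (1 + s)) (hr : r ≤ cR * (1 + s)) :
    Real.exp (t * a + t ^ 2 * r) ≤ Real.exp (cA * (1 + K) * t) * Real.exp (t ^ 2 * r)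
      + Real.exp (-K * t ^ 2) * Real.exp ((cR + cA + 1) * t ^ 2 * (1 + s)) := by
  rw [← Real.exp_add, ← Real.exp_add]
  have ha' : a ≤ cA * (1 + s) := (le_abs_self a).trans ha
  have hcA : 0 ≤ cA * (1 + s) := (abs_nonneg a).trans ha
  rcases le_or_gt s K with hsK | hKs
  · refine le_add_of_le_of_nonneg (Real.exp_le_exp.2 ?_) (Real.exp_pos _).le
    have hcA' : 0 ≤ cA := nonneg_of_mul_nonneg_left hcA (by linarith)
    nlinarith [mul_le_mul_of_nonneg_left hsK hcA']
  · refine le_add_of_nonneg_of_le (Real.exp_pos _).le (Real.exp_le_exp.2 ?_)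
    have htt : t ≤ t ^ 2 := by nlinarith
    nlinarith [mul_le_mul_of_nonneg_left ha' (by linarith : 0 ≤ t),
      mul_le_mul_of_nonneg_right htt hcA, mul_le_mul_of_nonneg_left hr (sq_nonneg t),
      mul_le_mul_of_nonneg_left hKs.le (sq_nonneg t)]

theorem lintegral_exp_mul_add_sq_mul_le {E : Type*} [SeminormedAddCommGroup E]
    [MeasurableSpace E] [OpensMeasurableSpace E] (μ : Measure E) {a r : E → ℝ} {t cA cR : ℝ}
    (K : ℝ) (ht : 1 ≤ t) (ha : ∀ η, |a η| ≤ cA * (1 + ‖η‖)) (hr : ∀ η, r η ≤ cR * (1 + ‖η‖)) :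
    ∫⁻ η, ENNReal.ofReal (Real.exp (t * a η + t ^ 2 * r η)) ∂μ
      ≤ ENNReal.ofReal (Real.exp (cA * (1 + K) * t))
          * ∫⁻ η, ENNReal.ofReal (Real.exp (t ^ 2 * r η)) ∂μ
        + ENNReal.ofReal (Real.exp (-K * t ^ 2))
          * ∫⁻ η, ENNReal.ofReal (Real.exp ((cR + cA + 1) * t ^ 2 * (1 + ‖η‖))) ∂μ := by
  have hmeas : Measurable fun η : E =>
      ENNReal.ofReal (Real.exp (-K * t ^ 2) * Real.exp ((cR + cA + 1) * t ^ 2 * (1 + ‖η‖))) := by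
    fun_prop
  calc ∫⁻ η, ENNReal.ofReal (Real.exp (t * a η + t ^ 2 * r η)) ∂μ
      ≤ ∫⁻ η, (ENNReal.ofReal (Real.exp (cA * (1 + K) * t) * Real.exp (t ^ 2 * r η))
          + ENNReal.ofReal (Real.exp (-K * t ^ 2)
            * Real.exp ((cR + cA + 1) * t ^ 2 * (1 + ‖η‖)))) ∂μ := by
        refine lintegral_mono fun η => ?_
        rw [← ENNReal.ofReal_add (by positivity) (by positivity)]
        exact ENNReal.ofReal_le_ofReal
          (Real.exp_mul_add_sq_mul_le K ht (norm_nonneg η) (ha η) (hr η))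
    _ = _ := by
        simp_rw [ENNReal.ofReal_mul (Real.exp_pos _).le] at hmeas ⊢
        rw [lintegral_add_right _ hmeas, lintegral_const_mul' _ _ ENNReal.ofReal_ne_top,
          lintegral_const_mul' _ _ ENNReal.ofReal_ne_top]

theorem limsup_exp_linear_term_negligible_general
    {T : ℝ} {d : ℕ}
    [MeasurableSpace (Pth T d)] [BorelSpace (Pth T d)]
    (μ : ℝ → Measure (Pth T d))
    (hexp : ∀ C : ℝ, 0 < C →
      Filter.limsup
        (fun ε : ℝ => ((ε ^ 2 : ℝ) : EReal) *
          ENNReal.log (∫⁻ η, ENNReal.ofReal (Real.exp (C * ε⁻¹ ^ 2 * (1 + ‖η‖))) ∂(μ ε)))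
        (𝓝[>] (0:ℝ)) < ⊤)
    (cR cA : ℝ) (hcR : 0 < cR) (hcA : 0 < cA)
    (R A : ℝ → Pth T d → ℝ)
    (hR : ∀ ε ∈ Ioi (0:ℝ), ∀ η : Pth T d, R ε η ≤ cR * (1 + ‖η‖))
    (hA : ∀ ε ∈ Ioi (0:ℝ), ∀ η : Pth T d, |A ε η| ≤ cA * (1 + ‖η‖)) :
    Filter.limsup
        (fun ε : ℝ => ((ε ^ 2 : ℝ) : EReal) *
          ENNReal.log (∫⁻ η, ENNReal.ofReal (Real.exp (ε⁻¹ * A ε η + ε⁻¹ ^ 2 * R ε η)) ∂(μ ε)))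
        (𝓝[>] (0:ℝ))
      ≤ Filter.limsup
        (fun ε : ℝ => ((ε ^ 2 : ℝ) : EReal) *
          ENNReal.log (∫⁻ η, ENNReal.ofReal (Real.exp (ε⁻¹ ^ 2 * R ε η)) ∂(μ ε)))
        (𝓝[>] (0:ℝ)) := by
  set J := fun ε => ∫⁻ η, ENNReal.ofReal (Real.exp (ε⁻¹ ^ 2 * R ε η)) ∂(μ ε)
  set G := fun ε => ∫⁻ η, ENNReal.ofReal (Real.exp ((cR + cA + 1) * ε⁻¹ ^ 2 * (1 + ‖η‖))) ∂(μ ε)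
  have hG : expGrowthRate G ≠ ⊤ := (hexp _ (by positivity)).ne
  change expGrowthRate _ ≤ expGrowthRate J
  refine EReal.le_of_forall_le_max_neg_add hG fun K => ?_
  have hsmall : Tendsto (fun ε : ℝ => ε ^ 2 * (cA * (1 + K) * ε⁻¹)) (𝓝[>] 0) (𝓝 0) := by
    have hlin : Tendsto (fun ε : ℝ => cA * (1 + K) * ε) (𝓝[>] 0) (𝓝 0) :=
      ((continuous_const_mul _).tendsto' 0 0 (mul_zero _)).mono_left nhdsWithin_le_nhds
    refine hlin.congr' (eventually_mem_nhdsWithin.mono fun ε (hε : 0 < ε) => ?_)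
    field_simp
  have hconst : Tendsto (fun ε : ℝ => ε ^ 2 * (-K * ε⁻¹ ^ 2)) (𝓝[>] 0) (𝓝 (-K)) :=
    tendsto_const_nhds.congr' (eventually_mem_nhdsWithin.mono fun ε (hε : 0 < ε) => by
      field_simp)
  calc expGrowthRate _
      ≤ expGrowthRate fun ε => ENNReal.ofReal (Real.exp (cA * (1 + K) * ε⁻¹)) * J ε
          + ENNReal.ofReal (Real.exp (-K * ε⁻¹ ^ 2)) * G ε := by
        refine expGrowthRate_mono ?_
        filter_upwards [Ioc_mem_nhdsGT one_pos] with ε ⟨hε, hε1⟩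
        exact lintegral_exp_mul_add_sq_mul_le (μ ε) K (one_le_inv₀ hε |>.2 hε1) (hA ε hε) (hR ε hε)
    _ ≤ max ((0 : ℝ) + expGrowthRate J) ((-K : ℝ) + expGrowthRate G) :=
        (expGrowthRate_add_le _ _).trans (max_le_max
          (expGrowthRate_ofReal_exp_mul_le hsmall J) (expGrowthRate_ofReal_exp_mul_le hconst G))
    _ = max (expGrowthRate J) ((-K : ℝ) + expGrowthRate G) := by rw [EReal.coe_zero, zero_add]

/-- **Lemma 5.2, first part (`llimsup`, inequality (5.125)).**
If the measures `μ^ε` on `C_d` have exponential moments of all linear-growth functionals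
(in the sense of Lemma 5.1), and `R̄^ε ≤ c_R(1+‖·‖_*)`, `|Ā^ε| ≤ c_A(1+‖·‖_*)`, then the
`ε⁻¹`-order term `Ā^ε` can be discarded in the Laplace asymptotics:
`limsup ε² log ∫ e^{ε⁻¹Ā^ε + ε⁻²R̄^ε} dμ^ε ≤ limsup ε² log ∫ e^{ε⁻²R̄^ε} dμ^ε`. -/
theorem limsup_exp_linear_term_negligible
    {T : ℝ} (hT : 0 < T) {d : ℕ}
    [MeasurableSpace (Pth T d)] [BorelSpace (Pth T d)]
    (μ : ℝ → Measure (Pth T d)) (hfin : ∀ ε ∈ Ioi (0:ℝ), IsFiniteMeasure (μ ε))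
    (hexp : ∀ C : ℝ, 0 < C →
      Filter.limsup
        (fun ε : ℝ => ((ε ^ 2 : ℝ) : EReal) *
          ENNReal.log (∫⁻ η, ENNReal.ofReal (Real.exp (C * ε⁻¹ ^ 2 * (1 + ‖η‖))) ∂(μ ε)))
        (𝓝[>] (0:ℝ)) < ⊤)
    (cR cA : ℝ) (hcR : 0 < cR) (hcA : 0 < cA)
    (R A : ℝ → Pth T d → ℝ)
    (hRmeas : ∀ ε ∈ Ioi (0:ℝ), Measurable (R ε))
    (hAmeas : ∀ ε ∈ Ioi (0:ℝ), Measurable (A ε))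
    (hR : ∀ ε ∈ Ioi (0:ℝ), ∀ η : Pth T d, R ε η ≤ cR * (1 + ‖η‖))
    (hA : ∀ ε ∈ Ioi (0:ℝ), ∀ η : Pth T d, |A ε η| ≤ cA * (1 + ‖η‖)) :
    Filter.limsup
        (fun ε : ℝ => ((ε ^ 2 : ℝ) : EReal) *
          ENNReal.log (∫⁻ η, ENNReal.ofReal (Real.exp (ε⁻¹ * A ε η + ε⁻¹ ^ 2 * R ε η)) ∂(μ ε)))
        (𝓝[>] (0:ℝ))
      ≤ Filter.limsup
        (fun ε : ℝ => ((ε ^ 2 : ℝ) : EReal) *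
          ENNReal.log (∫⁻ η, ENNReal.ofReal (Real.exp (ε⁻¹ ^ 2 * R ε η)) ∂(μ ε)))
        (𝓝[>] (0:ℝ)) :=
  limsup_exp_linear_term_negligible_general μ hexp cR cA hcR hcA R A hR hA

end
end

section
/- Let (μ^ε)_{ε>0} be finite Borel measures on C_d such that for every C ∈ (0,∞), limsup_{ε→0} ε² log ∫_{C_d} exp(C ε^{-2}(1+‖η‖_*)) μ^ε(dη) < ∞. Let c_A ∈ (0,∞) and for each ε > 0 let Ā^ε: C_d → ℝ be Borel measurable with |Ā^ε(η)| ≤ c_A(1+‖η‖_*) for all η ∈ C_d and all ε > 0. Then for every c₀ ∈ (0,∞), limsup_{M→∞} limsup_{ε→0} ε² log ∫_{{η : Ā^ε(η) ≥ M}} exp(ε^{-1} Ā^ε(η) + ε^{-2} c₀(1+‖η‖_*)) μ^ε(dη) = −∞. -/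
open MeasureTheory Set Filter Topology
open scoped ENNReal

noncomputable section

/-! On `{Ā^ε ≥ M}` the linear growth bound gives `M/c_A ≤ 1 + ‖η‖`, so the integrand is at most
`e^{-ε⁻²M/c_A}` times the exponential moment `e^{Cε⁻²(1+‖η‖)}` with `C = c_A + c₀ + 1`.
Hence the inner limsup is at most `-M/c_A + L` with `L < ∞` the limsup of the moments,
which tends to `-∞` as `M → ∞`. -/

namespace EReal

theorem limsup_coe_add_le {α : Type*} {f : Filter α} [f.NeBot] (c : ℝ) (u : α → EReal) :
    limsup (fun x => (c : EReal) + u x) f ≤ c + limsup u f := by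
  simpa [Pi.add_def] using
    limsup_add_le (u := fun _ => (c : EReal)) (v := u) (f := f) (.inl (by simp)) (.inl (by simp))

theorem tendsto_coe_add_nhds_bot {α : Type*} {l : Filter α} {g : α → ℝ}
    (hg : Tendsto g l atBot) {L : EReal} (hL : L ≠ ⊤) :
    Tendsto (fun x => (g x : EReal) + L) l (𝓝 ⊥) := by
  have h := (continuousAt_add (p := (⊥, L)) (.inl bot_ne_top) (.inr hL)).tendsto.comp
    ((tendsto_coe_nhds_bot_iff.mpr hg).prodMk_nhds tendsto_const_nhds)
  simpa only [Function.comp_def, bot_add] using h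

end EReal

theorem ENNReal.coe_mul_log_le_of_le_exp_mul {a b m : ℝ} (ha : 0 < a) (hab : a * b = 1)
    {I J : ℝ≥0∞} (hJ : J ≤ ENNReal.ofReal (Real.exp (-(b * m))) * I) :
    (a : EReal) * ENNReal.log J ≤ ((-m : ℝ) : EReal) + a * ENNReal.log I := by
  have ha' : (0 : EReal) ≤ a := by exact_mod_cast ha.le
  calc (a : EReal) * ENNReal.log J
      ≤ a * ENNReal.log (ENNReal.ofReal (Real.exp (-(b * m))) * I) :=
        mul_le_mul_of_nonneg_left (ENNReal.log_monotone hJ) ha'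
    _ = a * (((-(b * m) : ℝ) : EReal) + ENNReal.log I) := by
        rw [ENNReal.log_mul_add, ENNReal.log_ofReal_of_pos (Real.exp_pos _), Real.log_exp]
    _ = ((-m : ℝ) : EReal) + a * ENNReal.log I := by
        rw [EReal.left_distrib_of_nonneg_of_ne_top ha' (EReal.coe_ne_top a), ← EReal.coe_mul,
          mul_neg, ← mul_assoc, hab, one_mul]

theorem exponent_le_of_mem_superlevel {a w cA c₀ u M : ℝ} (hcA : 0 < cA) (hu : 1 ≤ u)
    (hw : 0 ≤ w) (haw : a ≤ cA * w) (hMa : M ≤ a) :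
    u * a + u ^ 2 * (c₀ * w) ≤ -(u ^ 2 * (M / cA)) + (cA + c₀ + 1) * u ^ 2 * w := by
  have hua : u * a ≤ u ^ 2 * (cA * w) :=
    calc u * a ≤ u * (cA * w) := by gcongr
      _ ≤ u ^ 2 * (cA * w) := by gcongr; nlinarith
  have hMw : u ^ 2 * (M / cA) ≤ u ^ 2 * w := by
    gcongr
    rw [div_le_iff₀ hcA]
    linarith
  linarith

theorem setLIntegral_exp_superlevel_le {X : Type*} [MeasurableSpace X] (μ : Measure X)
    {A w : X → ℝ} {cA c₀ u M : ℝ} (hcA : 0 < cA) (hu : 1 ≤ u) (hw : Measurable w)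
    (hw0 : ∀ x, 0 ≤ w x) (hAw : ∀ x, A x ≤ cA * w x) :
    ∫⁻ x in {x | M ≤ A x}, ENNReal.ofReal (Real.exp (u * A x + u ^ 2 * (c₀ * w x))) ∂μ ≤
      ENNReal.ofReal (Real.exp (-(u ^ 2 * (M / cA)))) *
        ∫⁻ x, ENNReal.ofReal (Real.exp ((cA + c₀ + 1) * u ^ 2 * w x)) ∂μ := by
  have hmeas : Measurable fun x => ENNReal.ofReal (Real.exp ((cA + c₀ + 1) * u ^ 2 * w x)) := by
    fun_prop
  calc ∫⁻ x in {x | M ≤ A x}, ENNReal.ofReal (Real.exp (u * A x + u ^ 2 * (c₀ * w x))) ∂μ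
      ≤ ∫⁻ x in {x | M ≤ A x}, ENNReal.ofReal (Real.exp (-(u ^ 2 * (M / cA)))) *
          ENNReal.ofReal (Real.exp ((cA + c₀ + 1) * u ^ 2 * w x)) ∂μ := by
        refine setLIntegral_mono (measurable_const.mul hmeas) fun x hx => ?_
        rw [← ENNReal.ofReal_mul (Real.exp_nonneg _), ← Real.exp_add]
        exact ENNReal.ofReal_le_ofReal <| Real.exp_le_exp.mpr <| exponent_le_of_mem_superlevel hcA hu (hw0 x) (hAw x) hx
    _ = ENNReal.ofReal (Real.exp (-(u ^ 2 * (M / cA)))) *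
          ∫⁻ x in {x | M ≤ A x}, ENNReal.ofReal (Real.exp ((cA + c₀ + 1) * u ^ 2 * w x)) ∂μ :=
        lintegral_const_mul _ hmeas
    _ ≤ _ := by gcongr; exact Measure.restrict_le_self

theorem limsup_exp_restricted_to_large_A_neg_infty_general
    {T : ℝ} {d : ℕ}
    [MeasurableSpace (Pth T d)] [BorelSpace (Pth T d)]
    (μ : ℝ → Measure (Pth T d))
    (hexp : ∀ C : ℝ, 0 < C →
      Filter.limsup
        (fun ε : ℝ => ((ε ^ 2 : ℝ) : EReal) *
          ENNReal.log (∫⁻ η, ENNReal.ofReal (Real.exp (C * ε⁻¹ ^ 2 * (1 + ‖η‖))) ∂(μ ε)))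
        (𝓝[>] (0:ℝ)) < ⊤)
    (cA : ℝ) (hcA : 0 < cA)
    (A : ℝ → Pth T d → ℝ)
    (hA : ∀ ε ∈ Ioi (0:ℝ), ∀ η : Pth T d, |A ε η| ≤ cA * (1 + ‖η‖))
    (c₀ : ℝ) (hc₀ : 0 < c₀) :
    Filter.limsup
      (fun M : ℝ =>
        Filter.limsup
          (fun ε : ℝ => ((ε ^ 2 : ℝ) : EReal) *
            ENNReal.log (∫⁻ η in {η : Pth T d | M ≤ A ε η},
              ENNReal.ofReal (Real.exp (ε⁻¹ * A ε η + ε⁻¹ ^ 2 * (c₀ * (1 + ‖η‖)))) ∂(μ ε)))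
          (𝓝[>] (0:ℝ)))
      Filter.atTop = (⊥ : EReal) := by
  set F : ℝ → EReal := fun ε => ((ε ^ 2 : ℝ) : EReal) *
    ENNReal.log (∫⁻ η, ENNReal.ofReal (Real.exp ((cA + c₀ + 1) * ε⁻¹ ^ 2 * (1 + ‖η‖))) ∂(μ ε))
  have hL : limsup F (𝓝[>] 0) < ⊤ := hexp _ (by positivity)
  have hinner : ∀ M : ℝ, limsup (fun ε : ℝ => ((ε ^ 2 : ℝ) : EReal) *
      ENNReal.log (∫⁻ η in {η : Pth T d | M ≤ A ε η},
        ENNReal.ofReal (Real.exp (ε⁻¹ * A ε η + ε⁻¹ ^ 2 * (c₀ * (1 + ‖η‖)))) ∂(μ ε)))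
      (𝓝[>] 0) ≤ ((-(M / cA) : ℝ) : EReal) + limsup F (𝓝[>] 0) := by
    intro M
    refine (limsup_le_limsup ?_).trans (EReal.limsup_coe_add_le _ F)
    filter_upwards [Ioo_mem_nhdsGT one_pos] with ε ⟨hε0, hε1⟩
    refine ENNReal.coe_mul_log_le_of_le_exp_mul (b := ε⁻¹ ^ 2) (pow_pos hε0 2) (by field_simp) ?_
    exact setLIntegral_exp_superlevel_le (μ ε) hcA (one_le_inv₀ hε0 |>.mpr hε1.le)
      (by fun_prop) (fun η => by positivity) (fun η => (abs_le.mp (hA ε hε0 η)).2)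
  refine le_bot_iff.mp ((limsup_le_limsup (Eventually.of_forall hinner)).trans ?_)
  exact (EReal.tendsto_coe_add_nhds_bot
    (tendsto_neg_atTop_atBot.comp (tendsto_id.atTop_div_const hcA)) hL.ne).limsup_eq.le

/-- **Lemma 5.2, second part (inequality (5.cobd)).**
Under the exponential moment condition on `(μ^ε)`, for linear-growth functionals `Ā^ε`
and any `c₀ > 0`,
`limsup_{M→∞} limsup_{ε→0} ε² log ∫_{Ā^ε ≥ M} e^{ε⁻¹Ā^ε + ε⁻²c₀(1+‖·‖_*)} dμ^ε = −∞`. -/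
theorem limsup_exp_restricted_to_large_A_neg_infty
    {T : ℝ} (hT : 0 < T) {d : ℕ}
    [MeasurableSpace (Pth T d)] [BorelSpace (Pth T d)]
    (μ : ℝ → Measure (Pth T d)) (hfin : ∀ ε ∈ Ioi (0:ℝ), IsFiniteMeasure (μ ε))
    (hexp : ∀ C : ℝ, 0 < C →
      Filter.limsup
        (fun ε : ℝ => ((ε ^ 2 : ℝ) : EReal) *
          ENNReal.log (∫⁻ η, ENNReal.ofReal (Real.exp (C * ε⁻¹ ^ 2 * (1 + ‖η‖))) ∂(μ ε)))
        (𝓝[>] (0:ℝ)) < ⊤)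
    (cA : ℝ) (hcA : 0 < cA)
    (A : ℝ → Pth T d → ℝ)
    (hAmeas : ∀ ε ∈ Ioi (0:ℝ), Measurable (A ε))
    (hA : ∀ ε ∈ Ioi (0:ℝ), ∀ η : Pth T d, |A ε η| ≤ cA * (1 + ‖η‖))
    (c₀ : ℝ) (hc₀ : 0 < c₀) :
    Filter.limsup
      (fun M : ℝ =>
        Filter.limsup
          (fun ε : ℝ => ((ε ^ 2 : ℝ) : EReal) *
            ENNReal.log (∫⁻ η in {η : Pth T d | M ≤ A ε η},
              ENNReal.ofReal (Real.exp (ε⁻¹ * A ε η + ε⁻¹ ^ 2 * (c₀ * (1 + ‖η‖)))) ∂(μ ε)))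
          (𝓝[>] (0:ℝ)))
      Filter.atTop = (⊥ : EReal) :=
  limsup_exp_restricted_to_large_A_neg_infty_general μ hexp cA hcA A hA c₀ hc₀

end
end

section
/- Under Assumption A, let M ∈ (0,∞) and let (φ_n) be a sequence in L²_k with ∫₀ᵀ‖φ_n(s)‖² ds ≤ M for all n, converging weakly in L²_k to φ. Then ξ₀^{φ_n} → ξ₀^φ in C_d, i.e., sup_{0≤t≤T} ‖ξ₀^{φ_n}(t) − ξ₀^φ(t)‖ → 0 as n → ∞. -/
/-! Write `η = ξ^ψ`, `ζ = ξ^φ` and `D(t) = ‖η(t) - ζ(t)‖`. Subtracting the integral equations and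
using the Lipschitz bounds gives `D(t) ≤ R + L ∫₀ᵗ D + L ∫₀ᵗ D ‖ψ‖`, where
`R = sup_t ‖∫₀ᵗ σ(ζ(s)) (ψ(s) - φ(s)) ds‖`. Evaluating this at a maximiser of `D` on `[0, t]` and
using AM-GM against `∫₀ᵀ ‖ψ‖² ≤ M` yields `D(t) ≤ 2R + (2L + L²M) ∫₀ᵗ D`, so by Grönwall
`‖ξ^ψ - ξ^φ‖ ≤ 2R e^{(2L + L²M)T}`.

It remains to see that `R → 0` along `ψ = φₙ`. For fixed `t` and `y`,
`⟪∫₀ᵗ σ(ζ) φₙ, y⟫ = ∫₀ᵀ ⟪φₙ, 1_{(0,t]} σ(ζ)* y⟫`, so weak convergence gives pointwise convergence in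
finite dimension. By Cauchy–Schwarz the maps `t ↦ ∫₀ᵗ σ(ζ) φₙ` share the modulus
`C √M √|t - t'|`, and an equicontinuous sequence converging pointwise on the compact `[0, T]`
converges uniformly. -/

open MeasureTheory Set Filter Topology
open scoped RealInnerProductSpace ENNReal NNReal

noncomputable section

/-- Extension of a path on `[0,T]` to all of `ℝ` by projection onto `[0,T]`. -/
def pext {T : ℝ} (hT : (0:ℝ) ≤ T) {p : ℕ} (η : Pth T p) : ℝ → EuclideanSpace ℝ (Fin p) :=
  fun s => η (Set.projIcc (0:ℝ) T hT s)

def L2on (T : ℝ) {p : ℕ} (f : ℝ → EuclideanSpace ℝ (Fin p)) : Prop :=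
  MeasureTheory.MemLp f 2 (MeasureTheory.volume.restrict (Set.Icc (0:ℝ) T))

def IsSol {T : ℝ} (hT : 0 < T) {d k : ℕ} (x₀ : EuclideanSpace ℝ (Fin d))
    (b : EuclideanSpace ℝ (Fin d) → EuclideanSpace ℝ (Fin d))
    (σ : EuclideanSpace ℝ (Fin d) → (EuclideanSpace ℝ (Fin k) →L[ℝ] EuclideanSpace ℝ (Fin d)))
    (φ : ℝ → EuclideanSpace ℝ (Fin k)) (η : Pth T d) : Prop :=
  ∀ t : Set.Icc (0:ℝ) T,
    η t = x₀ + (∫ s in Set.Icc (0:ℝ) (t:ℝ), b (pext hT.le η s))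
        + (∫ s in Set.Icc (0:ℝ) (t:ℝ), σ (pext hT.le η s) (φ s))

open scoped Interval

theorem tendsto_of_forall_inner_tendsto {ι E : Type*} [NormedAddCommGroup E]
    [InnerProductSpace ℝ E] [FiniteDimensional ℝ E] {l : Filter ι} {x : ι → E} {x₀ : E}
    (h : ∀ y, Tendsto (fun n => ⟪x n, y⟫) l (𝓝 ⟪x₀, y⟫)) : Tendsto x l (𝓝 x₀) := by
  let e := stdOrthonormalBasis ℝ E
  have hx : x = fun n => ∑ i, ⟪e i, x n⟫ • e i := funext fun n => (e.sum_repr' (x n)).symm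
  rw [← e.sum_repr' x₀, hx]
  refine tendsto_finsetSum _ fun i _ => ?_
  simpa only [real_inner_comm (e i)] using (h (e i)).smul_const (e i)

theorem IntegrableOn.clm_apply_of_continuousOn {X E F : Type*} [MeasurableSpace X]
    [TopologicalSpace X] [OpensMeasurableSpace X] [T2Space X] [SecondCountableTopology X]
    {μ : Measure X}
    [NormedAddCommGroup E] [NormedSpace ℝ E] [NormedAddCommGroup F] [NormedSpace ℝ F]
    {K : Set X} {A : X → F →L[ℝ] E} {w : X → F} (hw : IntegrableOn w K μ)
    (hA : ContinuousOn A K) (hK : IsCompact K) : IntegrableOn (fun x => A x (w x)) K μ := by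
  obtain ⟨C, hC⟩ := hK.exists_bound_of_continuousOn hA
  refine Integrable.mono' (hw.norm.const_mul C) ?_
    (ae_restrict_of_forall_mem hK.measurableSet fun x hx => (A x).le_of_opNorm_le (hC x hx) _)
  simpa using (ContinuousLinearMap.apply ℝ E).flip.aestronglyMeasurable_comp₂
    (hA.aestronglyMeasurable hK.measurableSet) hw.1

theorem IntegrableOn.intervalIntegrable_of_mem_Icc {E : Type*} [NormedAddCommGroup E]
    {f : ℝ → E} {c d a b : ℝ} (hf : IntegrableOn f (Icc c d)) (ha : a ∈ Icc c d)
    (hb : b ∈ Icc c d) : IntervalIntegrable f volume a b :=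
  intervalIntegrable_iff.2 (hf.mono_set (uIoc_subset_uIcc.trans (uIcc_subset_Icc ha hb)))

theorem integral_mul_le_sqrt_mul_sqrt {α : Type*} [MeasurableSpace α] {μ : Measure α}
    {f g : α → ℝ} (hf0 : 0 ≤ᵐ[μ] f) (hg0 : 0 ≤ᵐ[μ] g) (hf : MemLp f 2 μ) (hg : MemLp g 2 μ) :
    ∫ a, f a * g a ∂μ ≤ √(∫ a, f a ^ 2 ∂μ) * √(∫ a, g a ^ 2 ∂μ) := by
  have h := integral_mul_le_Lp_mul_Lq_of_nonneg Real.HolderConjugate.two_two hf0 hg0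
    (by simpa using hf) (by simpa using hg)
  simpa [Real.sqrt_eq_rpow] using h

theorem setIntegral_norm_le_sqrt_mul_sqrt {α E : Type*} [MeasurableSpace α] {μ : Measure α}
    [NormedAddCommGroup E] {s U : Set α} {w : α → E} (hsU : s ⊆ U) (hμs : μ s ≠ ∞)
    (hw : MemLp w 2 (μ.restrict U)) :
    ∫ x in s, ‖w x‖ ∂μ ≤ √(∫ x in U, ‖w x‖ ^ 2 ∂μ) * √(μ.real s) := by
  have : IsFiniteMeasure (μ.restrict s) := isFiniteMeasure_restrict.2 hμs
  have h := integral_mul_le_sqrt_mul_sqrt (μ := μ.restrict s) (f := fun x => ‖w x‖)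
    (g := fun _ => 1) (.of_forall fun _ => norm_nonneg _) (.of_forall fun _ => zero_le_one)
    (hw.mono_measure (Measure.restrict_mono hsU le_rfl)).norm (memLp_const 1)
  simp only [mul_one, one_pow, integral_const, smul_eq_mul, measureReal_restrict_apply_univ] at h
  refine h.trans (mul_le_mul_of_nonneg_right (Real.sqrt_le_sqrt ?_) (Real.sqrt_nonneg _))
  exact setIntegral_mono_set hw.norm.integrable_sq (.of_forall fun _ => sq_nonneg _)
    hsU.eventuallyLE

theorem le_mul_exp_of_le_add_mul_intervalIntegral {u : ℝ → ℝ} {A C T : ℝ} (hu : Continuous u)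
    (hC : 0 ≤ C) (h : ∀ t ∈ Icc 0 T, u t ≤ A + C * ∫ s in 0..t, u s) :
    ∀ t ∈ Icc 0 T, u t ≤ A * Real.exp (C * t) := by
  set w : ℝ → ℝ := fun t => A + C * ∫ s in 0..t, u s
  have hw : ∀ t, HasDerivAt w (C * u t) t := fun t =>
    ((hu.integral_hasStrictDerivAt 0 t).hasDerivAt.const_mul C).const_add A
  have hw_le := le_gronwallBound_of_liminf_deriv_right_le (f := w) (K := C) (ε := 0) (δ := A)
    (a := 0) (b := T) (fun t _ => (hw t).continuousAt.continuousWithinAt)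
    (fun t _ r hr => (hw t).hasDerivWithinAt.liminf_right_slope_le hr) (by simp [w])
    (fun t ht => by simpa using mul_le_mul_of_nonneg_left (h t (Ico_subset_Icc_self ht)) hC)
  intro t ht
  simpa [gronwallBound_ε0] using (h t ht).trans (hw_le t ht)

theorem intervalIntegral_le_setIntegral_Icc {f : ℝ → ℝ} {t T : ℝ} (ht : t ∈ Icc 0 T)
    (hf0 : ∀ s, 0 ≤ f s) (hf : IntegrableOn f (Icc 0 T)) :
    ∫ s in 0..t, f s ≤ ∫ s in Icc 0 T, f s := by
  rw [intervalIntegral.integral_of_le ht.1]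
  exact setIntegral_mono_set hf (.of_forall hf0)
    (Ioc_subset_Icc_self.trans (Icc_subset_Icc le_rfl ht.2)).eventuallyLE

theorem mul_intervalIntegral_mul_le {D g : ℝ → ℝ} {L M T t v : ℝ} (hD : Continuous D)
    (hD0 : ∀ s, 0 ≤ D s) (hDv : ∀ s ∈ Icc 0 t, D s ≤ v)
    (hg : MemLp g 2 (volume.restrict (Icc 0 T))) (hM : 0 < M)
    (hgM : ∫ s in Icc 0 T, g s ^ 2 ≤ M) (ht : t ∈ Icc 0 T) :
    L * ∫ s in 0..t, D s * g s ≤ L ^ 2 * M / 2 * (∫ s in 0..t, D s) + v / 2 := by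
  have h0 : (0 : ℝ) ∈ Icc 0 T := ⟨le_rfl, ht.1.trans ht.2⟩
  have hv : 0 ≤ v := (hD0 t).trans (hDv t (right_mem_Icc.2 ht.1))
  have hDg : IntervalIntegrable (fun s => D s * g s) volume 0 t :=
    IntegrableOn.intervalIntegrable_of_mem_Icc
      (IntegrableOn.continuousOn_mul hD.continuousOn (hg.integrable one_le_two) isCompact_Icc) h0 ht
  have hg2 : IntervalIntegrable (fun s => g s ^ 2) volume 0 t :=
    IntegrableOn.intervalIntegrable_of_mem_Icc hg.integrable_sq h0 ht
  have hpt : ∀ s ∈ Icc 0 t, L * (D s * g s) ≤ L ^ 2 * M / 2 * D s + v / (2 * M) * g s ^ 2 := by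
    intro s hs
    have hLg : L * g s ≤ L ^ 2 * M / 2 + g s ^ 2 / (2 * M) := by
      rw [div_add_div _ _ two_ne_zero (by positivity), le_div_iff₀ (by positivity)]
      nlinarith [sq_nonneg (L * M - g s)]
    calc L * (D s * g s) = D s * (L * g s) := by ring
      _ ≤ D s * (L ^ 2 * M / 2 + g s ^ 2 / (2 * M)) := mul_le_mul_of_nonneg_left hLg (hD0 s)
      _ = L ^ 2 * M / 2 * D s + D s * g s ^ 2 / (2 * M) := by ring
      _ ≤ L ^ 2 * M / 2 * D s + v * g s ^ 2 / (2 * M) := by gcongr; exact hDv s hs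
      _ = _ := by ring
  calc L * ∫ s in 0..t, D s * g s = ∫ s in 0..t, L * (D s * g s) :=
        (intervalIntegral.integral_const_mul _ _).symm
    _ ≤ ∫ s in 0..t, (L ^ 2 * M / 2 * D s + v / (2 * M) * g s ^ 2) :=
        intervalIntegral.integral_mono_on ht.1 (hDg.const_mul L)
          (((hD.intervalIntegrable 0 t).const_mul _).add (hg2.const_mul _)) hpt
    _ = L ^ 2 * M / 2 * (∫ s in 0..t, D s) + v / (2 * M) * ∫ s in 0..t, g s ^ 2 := by
        rw [intervalIntegral.integral_add ((hD.intervalIntegrable 0 t).const_mul _)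
          (hg2.const_mul _), intervalIntegral.integral_const_mul,
          intervalIntegral.integral_const_mul]
    _ ≤ L ^ 2 * M / 2 * (∫ s in 0..t, D s) + v / (2 * M) * M := by
        gcongr
        exact (intervalIntegral_le_setIntegral_Icc ht (fun s => sq_nonneg _)
          hg.integrable_sq).trans hgM
    _ = L ^ 2 * M / 2 * (∫ s in 0..t, D s) + v / 2 := by field_simp

theorem le_add_mul_intervalIntegral_of_le_add_intervalIntegral_mul {D g : ℝ → ℝ} {R L M T : ℝ}
    (hD : Continuous D) (hD0 : ∀ s, 0 ≤ D s) (hg0 : ∀ s, 0 ≤ g s)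
    (hg : MemLp g 2 (volume.restrict (Icc 0 T))) (hM : 0 < M)
    (hgM : ∫ s in Icc 0 T, g s ^ 2 ≤ M) (hL : 0 ≤ L)
    (h : ∀ t ∈ Icc 0 T, D t ≤ R + L * (∫ s in 0..t, D s) + L * ∫ s in 0..t, D s * g s) :
    ∀ t ∈ Icc 0 T, D t ≤ 2 * R + (2 * L + L ^ 2 * M) * ∫ s in 0..t, D s := by
  intro t ht
  obtain ⟨t₀, ht₀, hmax⟩ := isCompact_Icc.exists_isMaxOn (nonempty_Icc.2 ht.1) hD.continuousOn
  have hmono : ∀ f : ℝ → ℝ, (∀ s, 0 ≤ f s) → IntervalIntegrable f volume 0 t →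
      ∫ s in 0..t₀, f s ≤ ∫ s in 0..t, f s := fun f hf0 hf =>
    intervalIntegral.integral_mono_interval le_rfl ht₀.1 ht₀.2 (.of_forall hf0) hf
  have hDg : IntervalIntegrable (fun s => D s * g s) volume 0 t :=
    IntegrableOn.intervalIntegrable_of_mem_Icc
      (IntegrableOn.continuousOn_mul hD.continuousOn (hg.integrable one_le_two) isCompact_Icc)
      ⟨le_rfl, ht.1.trans ht.2⟩ ht
  have hv : D t₀ ≤ R + L * (∫ s in 0..t, D s) + L * ∫ s in 0..t, D s * g s := by
    refine (h t₀ ⟨ht₀.1, ht₀.2.trans ht.2⟩).trans ?_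
    gcongr R + L * ?_ + L * ?_
    · exact hmono D hD0 (hD.intervalIntegrable 0 t)
    · exact hmono _ (fun s => mul_nonneg (hD0 s) (hg0 s)) hDg
  have hJ := mul_intervalIntegral_mul_le (L := L) hD hD0 (fun s hs => hmax hs) hg hM hgM ht
  have ht₀t : D t ≤ D t₀ := hmax (right_mem_Icc.2 ht.1)
  linarith

section Controls

variable {T : ℝ} {k : ℕ}

theorem L2on.integrableOn {f : ℝ → EuclideanSpace ℝ (Fin k)} (hf : L2on T f) :
    IntegrableOn f (Icc 0 T) :=
  hf.integrable one_le_two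

theorem L2on_indicator_of_continuous {g : ℝ → EuclideanSpace ℝ (Fin k)} (hg : Continuous g)
    {S : Set ℝ} (hS : MeasurableSet S) : L2on T (S.indicator g) := by
  obtain ⟨C, hC⟩ := (isCompact_Icc (a := 0) (b := T)).exists_bound_of_continuousOn hg.continuousOn
  exact MemLp.of_bound (hg.aestronglyMeasurable.indicator hS) C
    (ae_restrict_of_forall_mem measurableSet_Icc fun s hs =>
      (norm_indicator_le_norm_self _ _).trans (hC s hs))

variable {E : Type*} [NormedAddCommGroup E] [InnerProductSpace ℝ E]
  {A : ℝ → EuclideanSpace ℝ (Fin k) →L[ℝ] E}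

theorem L2on.integrableOn_clm_apply (hA : Continuous A) {w : ℝ → EuclideanSpace ℝ (Fin k)}
    (hw : L2on T w) : IntegrableOn (fun s => A s (w s)) (Icc 0 T) :=
  IntegrableOn.clm_apply_of_continuousOn hw.integrableOn hA.continuousOn isCompact_Icc

theorem inner_intervalIntegral_clm_apply_eq [CompleteSpace E] (hA : Continuous A)
    {w : ℝ → EuclideanSpace ℝ (Fin k)} (hw : L2on T w) {t : ℝ} (ht : t ∈ Icc 0 T) (y : E) :
    ⟪∫ s in 0..t, A s (w s), y⟫ =
      ∫ s in Icc 0 T,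
        ⟪w s, (Ioc 0 t).indicator (fun s => ContinuousLinearMap.adjoint (A s) y) s⟫ := by
  have hsub : Ioc 0 t ⊆ Icc 0 T := Ioc_subset_Icc_self.trans (Icc_subset_Icc le_rfl ht.2)
  have hAw : IntegrableOn (fun s => A s (w s)) (Ioc 0 t) :=
    IntegrableOn.mono_set (hw.integrableOn_clm_apply hA) hsub
  calc ⟪∫ s in 0..t, A s (w s), y⟫ = ∫ s in Ioc 0 t, ⟪A s (w s), y⟫ := by
        rw [intervalIntegral.integral_of_le ht.1, real_inner_comm, ← integral_inner hAw]
        simp_rw [real_inner_comm]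
    _ = ∫ s in Icc 0 T, (Ioc 0 t).indicator
          (fun s => ⟪w s, ContinuousLinearMap.adjoint (A s) y⟫) s := by
        rw [setIntegral_indicator measurableSet_Ioc, inter_eq_right.2 hsub]
        simp_rw [ContinuousLinearMap.adjoint_inner_right]
    _ = _ := by
        congr with s
        by_cases hs : s ∈ Ioc 0 t <;> simp [hs]

theorem tendsto_intervalIntegral_clm_apply_of_weak [FiniteDimensional ℝ E] (hA : Continuous A)
    {φn : ℕ → ℝ → EuclideanSpace ℝ (Fin k)} {φ : ℝ → EuclideanSpace ℝ (Fin k)}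
    (hφn : ∀ n, L2on T (φn n)) (hφ : L2on T φ)
    (hweak : ∀ f : ℝ → EuclideanSpace ℝ (Fin k), L2on T f →
      Tendsto (fun n => ∫ s in Icc 0 T, ⟪φn n s, f s⟫) atTop (𝓝 (∫ s in Icc 0 T, ⟪φ s, f s⟫)))
    {t : ℝ} (ht : t ∈ Icc 0 T) :
    Tendsto (fun n => ∫ s in 0..t, A s (φn n s)) atTop (𝓝 (∫ s in 0..t, A s (φ s))) := by
  refine tendsto_of_forall_inner_tendsto fun y => ?_
  simp_rw [inner_intervalIntegral_clm_apply_eq hA (hφn _) ht,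
    inner_intervalIntegral_clm_apply_eq hA hφ ht]
  refine hweak _ (L2on_indicator_of_continuous ?_ measurableSet_Ioc)
  exact (ContinuousLinearMap.adjoint.continuous.comp hA).clm_apply continuous_const

theorem norm_intervalIntegral_clm_apply_le {C : ℝ} (hC : ∀ s ∈ Icc 0 T, ‖A s‖ ≤ C)
    {w : ℝ → EuclideanSpace ℝ (Fin k)} (hw : L2on T w) {a b : ℝ} (ha : a ∈ Icc 0 T)
    (hb : b ∈ Icc 0 T) :
    ‖∫ s in a..b, A s (w s)‖ ≤ C * √(∫ s in Icc 0 T, ‖w s‖ ^ 2) * √|b - a| := by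
  have hsub : Ι a b ⊆ Icc 0 T := uIoc_subset_uIcc.trans (uIcc_subset_Icc ha hb)
  have hC0 : 0 ≤ C := (norm_nonneg _).trans (hC a ha)
  rw [intervalIntegral.norm_integral_eq_norm_integral_uIoc]
  calc ‖∫ s in Ι a b, A s (w s)‖ ≤ ∫ s in Ι a b, C * ‖w s‖ :=
        norm_integral_le_of_norm_le ((hw.integrableOn.mono_set hsub).norm.const_mul C)
          (ae_restrict_of_forall_mem measurableSet_uIoc fun s hs =>
            (A s).le_of_opNorm_le (hC s (hsub hs)) _)
    _ = C * ∫ s in Ι a b, ‖w s‖ := integral_const_mul _ _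
    _ ≤ C * (√(∫ s in Icc 0 T, ‖w s‖ ^ 2) * √(volume.real (Ι a b))) := by
        gcongr
        exact setIntegral_norm_le_sqrt_mul_sqrt hsub (by simp) hw
    _ = C * √(∫ s in Icc 0 T, ‖w s‖ ^ 2) * √|b - a| := by
        simp [Measure.real, Real.volume_uIoc, mul_assoc]

theorem equicontinuous_intervalIntegral_clm_apply (hA : Continuous A)
    {φn : ℕ → ℝ → EuclideanSpace ℝ (Fin k)} (hφn : ∀ n, L2on T (φn n)) {M : ℝ}
    (hM : ∀ n, ∫ s in Icc 0 T, ‖φn n s‖ ^ 2 ≤ M) :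
    Equicontinuous fun n (t : Icc 0 T) => ∫ s in 0..(t : ℝ), A s (φn n s) := by
  obtain ⟨C, hC⟩ := (isCompact_Icc (a := 0) (b := T)).exists_bound_of_continuousOn hA.continuousOn
  refine Metric.equicontinuous_of_continuity_modulus (fun δ => C * √M * √δ) ?_ _ fun t t' n => ?_
  · simpa using (Real.continuous_sqrt.tendsto 0).const_mul (C * √M)
  have hC0 : 0 ≤ C := (norm_nonneg _).trans (hC t t.2)
  have hint : ∀ t ∈ Icc 0 T, IntervalIntegrable (fun s => A s (φn n s)) volume 0 t := fun t ht =>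
    IntegrableOn.intervalIntegrable_of_mem_Icc ((hφn n).integrableOn_clm_apply hA)
      ⟨le_rfl, ht.1.trans ht.2⟩ ht
  rw [dist_eq_norm, intervalIntegral.integral_interval_sub_left (hint t t.2) (hint t' t'.2),
    Subtype.dist_eq, Real.dist_eq]
  refine (norm_intervalIntegral_clm_apply_le hC (hφn n) t'.2 t.2).trans ?_
  gcongr
  exact hM n

theorem tendstoUniformly_intervalIntegral_clm_apply_of_weak [FiniteDimensional ℝ E]
    (hA : Continuous A)
    {φn : ℕ → ℝ → EuclideanSpace ℝ (Fin k)} {φ : ℝ → EuclideanSpace ℝ (Fin k)}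
    (hφn : ∀ n, L2on T (φn n)) (hφ : L2on T φ) {M : ℝ}
    (hM : ∀ n, ∫ s in Icc 0 T, ‖φn n s‖ ^ 2 ≤ M)
    (hweak : ∀ f : ℝ → EuclideanSpace ℝ (Fin k), L2on T f →
      Tendsto (fun n => ∫ s in Icc 0 T, ⟪φn n s, f s⟫) atTop (𝓝 (∫ s in Icc 0 T, ⟪φ s, f s⟫))) :
    TendstoUniformly (fun n (t : Icc 0 T) => ∫ s in 0..(t : ℝ), A s (φn n s))
      (fun t => ∫ s in 0..(t : ℝ), A s (φ s)) atTop := by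
  refine UniformFun.tendsto_iff_tendstoUniformly.1
    (((equicontinuous_intervalIntegral_clm_apply hA hφn hM).tendsto_uniformFun_iff_pi _ _).2 ?_)
  exact tendsto_pi_nhds.2 fun t => tendsto_intervalIntegral_clm_apply_of_weak hA hφn hφ hweak t.2

end Controls

section Solutions

theorem pext_of_mem {T : ℝ} (hT : 0 ≤ T) {p : ℕ} (η : Pth T p) {t : ℝ} (ht : t ∈ Icc 0 T) :
    pext hT η t = η ⟨t, ht⟩ := by
  simp [pext, projIcc_of_mem hT ht]

theorem continuous_pext {T : ℝ} (hT : 0 ≤ T) {p : ℕ} (η : Pth T p) : Continuous (pext hT η) :=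
  η.continuous.comp continuous_projIcc

variable {T : ℝ} {hT : 0 < T} {d k : ℕ} {x₀ : EuclideanSpace ℝ (Fin d)}
  {b : EuclideanSpace ℝ (Fin d) → EuclideanSpace ℝ (Fin d)}
  {σ : EuclideanSpace ℝ (Fin d) → EuclideanSpace ℝ (Fin k) →L[ℝ] EuclideanSpace ℝ (Fin d)}
  {ψ φ : ℝ → EuclideanSpace ℝ (Fin k)} {η ζ : Pth T d}

theorem IsSol.pext_eq (hη : IsSol hT x₀ b σ φ η) {t : ℝ} (ht : t ∈ Icc 0 T) :
    pext hT.le η t =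
      x₀ + (∫ s in 0..t, b (pext hT.le η s)) + ∫ s in 0..t, σ (pext hT.le η s) (φ s) := by
  rw [pext_of_mem hT.le η ht, hη ⟨t, ht⟩, integral_Icc_eq_integral_Ioc,
    integral_Icc_eq_integral_Ioc, ← intervalIntegral.integral_of_le ht.1,
    ← intervalIntegral.integral_of_le ht.1]

theorem IsSol.norm_pext_sub_le {L : ℝ≥0} (hb : LipschitzWith L b) (hσ : LipschitzWith L σ)
    (hψ : L2on T ψ) (hη : IsSol hT x₀ b σ ψ η) (hζ : IsSol hT x₀ b σ φ ζ)
    {t : ℝ} (ht : t ∈ Icc 0 T) :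
    ‖pext hT.le η t - pext hT.le ζ t‖ ≤
      ‖(∫ s in 0..t, σ (pext hT.le ζ s) (ψ s)) - ∫ s in 0..t, σ (pext hT.le ζ s) (φ s)‖
        + L * (∫ s in 0..t, ‖pext hT.le η s - pext hT.le ζ s‖)
        + L * ∫ s in 0..t, ‖pext hT.le η s - pext hT.le ζ s‖ * ‖ψ s‖ := by
  have hηt := hη.pext_eq ht
  have hζt := hζ.pext_eq ht
  set η' := pext hT.le η
  set ζ' := pext hT.le ζ
  have hη' : Continuous η' := continuous_pext hT.le η
  have hζ' : Continuous ζ' := continuous_pext hT.le ζ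
  have h0t : (0 : ℝ) ∈ Icc 0 T := ⟨le_rfl, ht.1.trans ht.2⟩
  have hint : ∀ A : ℝ → EuclideanSpace ℝ (Fin k) →L[ℝ] EuclideanSpace ℝ (Fin d), Continuous A →
      IntervalIntegrable (fun s => A s (ψ s)) volume 0 t := fun _ hA =>
    IntegrableOn.intervalIntegrable_of_mem_Icc (hψ.integrableOn_clm_apply hA) h0t ht
  have hση : Continuous fun s => σ (η' s) := hσ.continuous.comp hη'
  have hσζ : Continuous fun s => σ (ζ' s) := hσ.continuous.comp hζ'
  have hbη : Continuous fun s => b (η' s) := hb.continuous.comp hη'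
  have hbζ : Continuous fun s => b (ζ' s) := hb.continuous.comp hζ'
  have hdiff : η' t - ζ' t = ((∫ s in 0..t, σ (ζ' s) (ψ s)) - ∫ s in 0..t, σ (ζ' s) (φ s))
      + (∫ s in 0..t, (b (η' s) - b (ζ' s))) + ∫ s in 0..t, (σ (η' s) - σ (ζ' s)) (ψ s) := by
    simp_rw [sub_apply]
    rw [hηt, hζt, intervalIntegral.integral_sub (hint _ hση) (hint _ hσζ),
      intervalIntegral.integral_sub (hbη.intervalIntegrable _ _) (hbζ.intervalIntegrable _ _)]
    abel
  rw [hdiff]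
  refine norm_add₃_le.trans (add_le_add_three le_rfl ?_ ?_) <;>
    rw [← intervalIntegral.integral_const_mul]
  · exact intervalIntegral.norm_integral_le_of_norm_le ht.1
      (.of_forall fun s _ => hb.norm_sub_le _ _)
      ((continuous_const.mul (hη'.sub hζ').norm).intervalIntegrable _ _)
  refine intervalIntegral.norm_integral_le_of_norm_le ht.1 (.of_forall fun s _ => ?_) ?_
  · calc ‖(σ (η' s) - σ (ζ' s)) (ψ s)‖ ≤ ‖σ (η' s) - σ (ζ' s)‖ * ‖ψ s‖ :=
          ContinuousLinearMap.le_opNorm _ _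
      _ ≤ L * ‖η' s - ζ' s‖ * ‖ψ s‖ := by gcongr; exact hσ.norm_sub_le _ _
      _ = _ := mul_assoc _ _ _
  · exact (IntegrableOn.intervalIntegrable_of_mem_Icc (IntegrableOn.continuousOn_mul
      (hη'.sub hζ').norm.continuousOn hψ.integrableOn.norm isCompact_Icc) h0t ht).const_mul _

theorem IsSol.norm_sub_le {L : ℝ≥0} (hb : LipschitzWith L b) (hσ : LipschitzWith L σ)
    (hψ : L2on T ψ) {M : ℝ} (hM : 0 < M) (hψM : ∫ s in Icc 0 T, ‖ψ s‖ ^ 2 ≤ M)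
    (hη : IsSol hT x₀ b σ ψ η) (hζ : IsSol hT x₀ b σ φ ζ) {R : ℝ}
    (hR : ∀ t ∈ Icc 0 T,
      ‖(∫ s in 0..t, σ (pext hT.le ζ s) (ψ s)) - ∫ s in 0..t, σ (pext hT.le ζ s) (φ s)‖ ≤ R) :
    ‖η - ζ‖ ≤ 2 * R * Real.exp ((2 * L + L ^ 2 * M) * T) := by
  set D := fun s => ‖pext hT.le η s - pext hT.le ζ s‖
  have hD : Continuous D := ((continuous_pext _ η).sub (continuous_pext _ ζ)).norm
  have hR0 : 0 ≤ R := (norm_nonneg _).trans (hR 0 ⟨le_rfl, hT.le⟩)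
  have hlin : ∀ t ∈ Icc 0 T, D t ≤ 2 * R + (2 * L + L ^ 2 * M) * ∫ s in 0..t, D s :=
    le_add_mul_intervalIntegral_of_le_add_intervalIntegral_mul hD (fun _ => norm_nonneg _)
      (fun _ => norm_nonneg _) hψ.norm hM hψM L.2 fun t ht =>
        (hη.norm_pext_sub_le hb hσ hψ hζ ht).trans (by gcongr; exact hR t ht)
  have hexp := le_mul_exp_of_le_add_mul_intervalIntegral hD (by positivity) hlin
  refine (ContinuousMap.norm_le _ (by positivity)).2 fun t => ?_
  calc ‖(η - ζ) t‖ = D t := by simp [D, pext_of_mem hT.le _ t.2]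
    _ ≤ 2 * R * Real.exp ((2 * L + L ^ 2 * M) * t) := hexp t t.2
    _ ≤ 2 * R * Real.exp ((2 * L + L ^ 2 * M) * T) := by gcongr; exact t.2.2

end Solutions

theorem solution_map_weakly_continuous_general
    {T : ℝ} (hT : 0 < T) {d k : ℕ}
    (x₀ : EuclideanSpace ℝ (Fin d))
    (b : EuclideanSpace ℝ (Fin d) → EuclideanSpace ℝ (Fin d))
    (σ : EuclideanSpace ℝ (Fin d) → (EuclideanSpace ℝ (Fin k) →L[ℝ] EuclideanSpace ℝ (Fin d)))
    (clip : ℝ≥0) (hb : LipschitzWith clip b) (hσ : LipschitzWith clip σ)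
    (M : ℝ) (hM : 0 < M)
    (φn : ℕ → ℝ → EuclideanSpace ℝ (Fin k)) (φ : ℝ → EuclideanSpace ℝ (Fin k))
    (hφnL2 : ∀ n, L2on T (φn n)) (hφL2 : L2on T φ)
    (hφbd : ∀ n, (∫ s in Set.Icc (0:ℝ) T, ‖φn n s‖ ^ 2) ≤ M)
    (hweak : ∀ f : ℝ → EuclideanSpace ℝ (Fin k), L2on T f →
      Filter.Tendsto (fun n => ∫ s in Set.Icc (0:ℝ) T, ⟪φn n s, f s⟫)
        Filter.atTop (𝓝 (∫ s in Set.Icc (0:ℝ) T, ⟪φ s, f s⟫)))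
    (ξn : ℕ → Pth T d) (ξ : Pth T d)
    (hξn : ∀ n, IsSol hT x₀ b σ (φn n) (ξn n)) (hξ : IsSol hT x₀ b σ φ ξ) :
    Filter.Tendsto ξn Filter.atTop (𝓝 ξ) := by
  have hunif := tendstoUniformly_intervalIntegral_clm_apply_of_weak
    (hσ.continuous.comp (continuous_pext hT.le ξ)) hφnL2 hφL2 hφbd hweak
  set E := Real.exp ((2 * clip + clip ^ 2 * M) * T)
  have hE : 0 < E := Real.exp_pos _
  refine Metric.tendsto_nhds.2 fun ε hε => ?_
  filter_upwards [Metric.tendstoUniformly_iff.1 hunif (ε / (4 * E)) (by positivity)] with n hn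
  calc dist (ξn n) ξ = ‖ξn n - ξ‖ := dist_eq_norm _ _
    _ ≤ 2 * (ε / (4 * E)) * E :=
        (hξn n).norm_sub_le hb hσ (hφnL2 n) hM (hφbd n) hξ fun t ht => by
          simpa [dist_eq_norm', norm_sub_rev] using (hn ⟨t, ht⟩).le
    _ = ε / 2 := by field_simp; ring
    _ < ε := half_lt_self hε

/-- **Continuity of the solution map under weak `L²` convergence of controls.**
Under Assumption A, if `φ_n → φ` weakly in `L²([0,T];ℝ^k)` with `∫₀ᵀ‖φ_n‖² ≤ M`, then
the corresponding solutions satisfy `ξ₀^{φ_n} → ξ₀^φ` uniformly on `[0,T]`. -/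
theorem solution_map_weakly_continuous
    {T : ℝ} (hT : 0 < T) {d k m : ℕ}
    (x₀ : EuclideanSpace ℝ (Fin d))
    (b : EuclideanSpace ℝ (Fin d) → EuclideanSpace ℝ (Fin d))
    (σ : EuclideanSpace ℝ (Fin d) → (EuclideanSpace ℝ (Fin k) →L[ℝ] EuclideanSpace ℝ (Fin d)))
    (h : EuclideanSpace ℝ (Fin d) → EuclideanSpace ℝ (Fin m))
    (clip : ℝ≥0) (hb : LipschitzWith clip b) (hσ : LipschitzWith clip σ)
    (hh : LipschitzWith clip h)
    (cσ : ℝ) (hσbd : ∀ x, ‖σ x‖ ≤ cσ)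
    (M : ℝ) (hM : 0 < M)
    (φn : ℕ → ℝ → EuclideanSpace ℝ (Fin k)) (φ : ℝ → EuclideanSpace ℝ (Fin k))
    (hφnL2 : ∀ n, L2on T (φn n)) (hφL2 : L2on T φ)
    (hφbd : ∀ n, (∫ s in Set.Icc (0:ℝ) T, ‖φn n s‖ ^ 2) ≤ M)
    (hweak : ∀ f : ℝ → EuclideanSpace ℝ (Fin k), L2on T f →
      Filter.Tendsto (fun n => ∫ s in Set.Icc (0:ℝ) T, ⟪φn n s, f s⟫)
        Filter.atTop (𝓝 (∫ s in Set.Icc (0:ℝ) T, ⟪φ s, f s⟫)))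
    (ξn : ℕ → Pth T d) (ξ : Pth T d)
    (hξn : ∀ n, IsSol hT x₀ b σ (φn n) (ξn n)) (hξ : IsSol hT x₀ b σ φ ξ) :
    Filter.Tendsto ξn Filter.atTop (𝓝 ξ) :=
  solution_map_weakly_continuous_general hT x₀ b σ clip hb hσ M hM φn φ hφnL2 hφL2 hφbd hweak ξn ξ
    hξn hξ

end
end

section
/- Under Assumption A, let Φ: C_d → ℝ be bounded and continuous and let M ∈ (0,∞). Then there exists κ ∈ (0,∞) such that, with K = {η ∈ C_d : J(η) ≤ κ}, for every (φ,ψ) ∈ L²_k × L²_m with ½∫₀ᵀ(‖φ(s)‖² + ‖ψ(s)‖²) ds ≤ M one has inf_{η∈C_d}[H(η, ξ₀^φ, ψ) + Φ(η) + J(η)] = inf_{η∈K}[H(η, ξ₀^φ, ψ) + Φ(η) + J(η)] and inf_{η∈C_d}[H(η, ξ₀^φ, ψ) + J(η)] = inf_{η∈K}[H(η, ξ₀^φ, ψ) + J(η)]. -/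
open MeasureTheory Set Filter Topology
open scoped ENNReal NNReal

noncomputable section

/-- The rate function `J`, with `inf ∅ = ∞` (`EReal`-valued). -/
def Jrate {T : ℝ} (hT : 0 < T) {d k : ℕ} (x₀ : EuclideanSpace ℝ (Fin d))
    (b : EuclideanSpace ℝ (Fin d) → EuclideanSpace ℝ (Fin d))
    (σ : EuclideanSpace ℝ (Fin d) → (EuclideanSpace ℝ (Fin k) →L[ℝ] EuclideanSpace ℝ (Fin d)))
    (η : Pth T d) : EReal :=
  sInf {z : EReal | ∃ φ : ℝ → EuclideanSpace ℝ (Fin k),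
    L2on T φ ∧ IsSol hT x₀ b σ φ η ∧
    z = ((2⁻¹ * ∫ s in Set.Icc (0:ℝ) T, ‖φ s‖ ^ 2 : ℝ) : EReal)}

/-- `H(η, η̃, ψ) = ½∫₀ᵀ ‖h(η(s)) − h(η̃(s)) − ψ(s)‖² ds`. -/
def Hfun {T : ℝ} (hT : 0 < T) {d m : ℕ}
    (h : EuclideanSpace ℝ (Fin d) → EuclideanSpace ℝ (Fin m))
    (η ηt : Pth T d) (ψ : ℝ → EuclideanSpace ℝ (Fin m)) : ℝ :=
  2⁻¹ * ∫ s in Set.Icc (0:ℝ) T, ‖h (pext hT.le η s) - h (pext hT.le ηt s) - ψ s‖ ^ 2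

/-
Write the objective as `g + J` with `g ≥ -C` (`C` bounding `|Φ|`, and `H ≥ 0`).
The controlled path `ξ₀^φ` itself is a competitor with `J(ξ₀^φ) ≤ M` and `H(ξ₀^φ, ξ₀^φ, ψ) ≤ M`,
so its value is at most `2M + C`. Any `η` with `J(η) > κ := 2M + 2C` has value at least
`-C + κ = 2M + C`, hence does not lower the infimum.
-/

theorem iInf_add_eq_biInf_sublevel {α β : Type*} [CompleteLinearOrder β] [Add β]
    [AddLeftMono β] [AddRightMono β] {g J : α → β} {c κ : β} (hg : ∀ y, c ≤ g y)
    {x : α} (hJx : J x ≤ κ) (hx : g x + J x ≤ c + κ) :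
    ⨅ y, g y + J y = ⨅ y ∈ {y | J y ≤ κ}, g y + J y := by
  refine le_antisymm (le_iInf₂ fun y _ => iInf_le _ y) (le_iInf fun y => ?_)
  by_cases hy : J y ≤ κ
  · exact iInf₂_le y hy
  · calc ⨅ y ∈ {y | J y ≤ κ}, g y + J y ≤ g x + J x := iInf₂_le x hJx
      _ ≤ c + κ := hx
      _ ≤ g y + J y := add_le_add (hg y) (le_of_not_ge hy)

theorem EReal.coe_add_le_coe_add_coe {a b c d : ℝ} {x : EReal} (hx : x ≤ b)
    (h : a + b ≤ c + d) : (a : EReal) + x ≤ (c : EReal) + d :=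
  calc (a : EReal) + x ≤ a + b := add_le_add_right hx _
    _ = ((a + b : ℝ) : EReal) := (EReal.coe_add a b).symm
    _ ≤ ((c + d : ℝ) : EReal) := EReal.coe_le_coe_iff.mpr h
    _ = (c : EReal) + d := EReal.coe_add c d

section RateAndCost

variable {T : ℝ} (hT : 0 < T) {d k m : ℕ}

theorem Jrate_le_of_isSol {x₀ : EuclideanSpace ℝ (Fin d)}
    {b : EuclideanSpace ℝ (Fin d) → EuclideanSpace ℝ (Fin d)}
    {σ : EuclideanSpace ℝ (Fin d) → (EuclideanSpace ℝ (Fin k) →L[ℝ] EuclideanSpace ℝ (Fin d))}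
    {φ : ℝ → EuclideanSpace ℝ (Fin k)} {η : Pth T d} (hφ : L2on T φ)
    (hη : IsSol hT x₀ b σ φ η) :
    Jrate hT x₀ b σ η ≤ ((2⁻¹ * ∫ s in Icc (0:ℝ) T, ‖φ s‖ ^ 2 : ℝ) : EReal) :=
  sInf_le ⟨φ, hφ, hη, rfl⟩

variable (h : EuclideanSpace ℝ (Fin d) → EuclideanSpace ℝ (Fin m))

theorem Hfun_nonneg (η ηt : Pth T d) (ψ : ℝ → EuclideanSpace ℝ (Fin m)) :
    0 ≤ Hfun hT h η ηt ψ :=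
  mul_nonneg (by norm_num) (integral_nonneg fun _ => sq_nonneg _)

theorem Hfun_self (η : Pth T d) (ψ : ℝ → EuclideanSpace ℝ (Fin m)) :
    Hfun hT h η η ψ = 2⁻¹ * ∫ s in Icc (0:ℝ) T, ‖ψ s‖ ^ 2 := by
  simp only [Hfun, sub_self, zero_sub, norm_neg]

end RateAndCost

theorem variational_inf_reduction_to_compact_general
    {T : ℝ} (hT : 0 < T) {d k m : ℕ}
    (x₀ : EuclideanSpace ℝ (Fin d))
    (b : EuclideanSpace ℝ (Fin d) → EuclideanSpace ℝ (Fin d))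
    (σ : EuclideanSpace ℝ (Fin d) → (EuclideanSpace ℝ (Fin k) →L[ℝ] EuclideanSpace ℝ (Fin d)))
    (h : EuclideanSpace ℝ (Fin d) → EuclideanSpace ℝ (Fin m))
    (Φ : Pth T d → ℝ) (hΦb : ∃ C, ∀ η, |Φ η| ≤ C)
    (M : ℝ) (hM : 0 < M) :
    ∃ κ : ℝ, 0 < κ ∧
      ∀ (φ : ℝ → EuclideanSpace ℝ (Fin k)) (ψ : ℝ → EuclideanSpace ℝ (Fin m)),
        L2on T φ → L2on T ψ →
        2⁻¹ * ((∫ s in Set.Icc (0:ℝ) T, ‖φ s‖ ^ 2) + ∫ s in Set.Icc (0:ℝ) T, ‖ψ s‖ ^ 2) ≤ M →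
        ∀ ξφ : Pth T d, IsSol hT x₀ b σ φ ξφ →
          ((⨅ η : Pth T d,
              (((Hfun hT h η ξφ ψ + Φ η : ℝ) : EReal) + Jrate hT x₀ b σ η))
            = ⨅ η ∈ {η : Pth T d | Jrate hT x₀ b σ η ≤ ((κ : ℝ) : EReal)},
              (((Hfun hT h η ξφ ψ + Φ η : ℝ) : EReal) + Jrate hT x₀ b σ η)) ∧
          ((⨅ η : Pth T d,
              (((Hfun hT h η ξφ ψ : ℝ) : EReal) + Jrate hT x₀ b σ η))
            = ⨅ η ∈ {η : Pth T d | Jrate hT x₀ b σ η ≤ ((κ : ℝ) : EReal)},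
              (((Hfun hT h η ξφ ψ : ℝ) : EReal) + Jrate hT x₀ b σ η)) := by
  obtain ⟨C, hC⟩ := hΦb
  have hC0 : 0 ≤ C := (abs_nonneg _).trans (hC 0)
  refine ⟨2 * M + 2 * C, by positivity, fun φ ψ hφ _ hφψ ξφ hξφ => ?_⟩
  have hφ2 : 0 ≤ ∫ s in Icc (0:ℝ) T, ‖φ s‖ ^ 2 := integral_nonneg fun _ => sq_nonneg _
  have hψ2 : 0 ≤ ∫ s in Icc (0:ℝ) T, ‖ψ s‖ ^ 2 := integral_nonneg fun _ => sq_nonneg _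
  have hJ : Jrate hT x₀ b σ ξφ ≤ ((M : ℝ) : EReal) :=
    (Jrate_le_of_isSol hT hφ hξφ).trans (EReal.coe_le_coe_iff.mpr (by linarith))
  have hJκ : Jrate hT x₀ b σ ξφ ≤ ((2 * M + 2 * C : ℝ) : EReal) :=
    hJ.trans (EReal.coe_le_coe_iff.mpr (by linarith))
  have hH : Hfun hT h ξφ ξφ ψ ≤ M := by rw [Hfun_self]; linarith
  have hHnn := Hfun_nonneg hT h (ψ := ψ) (ηt := ξφ)
  have hΦ := fun η => abs_le.mp (hC η)
  constructor
  · refine iInf_add_eq_biInf_sublevel (c := ((-C : ℝ) : EReal)) (fun η => ?_) hJκ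
      (EReal.coe_add_le_coe_add_coe hJ (by linarith [hΦ ξφ]))
    exact EReal.coe_le_coe_iff.mpr (by linarith [hΦ η, hHnn η])
  · exact iInf_add_eq_biInf_sublevel (c := ((0 : ℝ) : EReal))
      (fun η => EReal.coe_le_coe_iff.mpr (hHnn η)) hJκ
      (EReal.coe_add_le_coe_add_coe hJ (by linarith))

/-- **Reduction of the variational problems to a fixed compact sublevel set of `J`.**
Under Assumption A, for bounded continuous `Φ` and `M > 0` there is `κ > 0` such that,
with `K = {J ≤ κ}`, for all `(φ,ψ)` with `½∫₀ᵀ(‖φ‖²+‖ψ‖²) ≤ M` both infima defining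
`V₀^{φ,ψ}[Φ]` may be taken over `K` instead of all of `C_d`. -/
theorem variational_inf_reduction_to_compact
    {T : ℝ} (hT : 0 < T) {d k m : ℕ}
    (x₀ : EuclideanSpace ℝ (Fin d))
    (b : EuclideanSpace ℝ (Fin d) → EuclideanSpace ℝ (Fin d))
    (σ : EuclideanSpace ℝ (Fin d) → (EuclideanSpace ℝ (Fin k) →L[ℝ] EuclideanSpace ℝ (Fin d)))
    (h : EuclideanSpace ℝ (Fin d) → EuclideanSpace ℝ (Fin m))
    (clip : ℝ≥0) (hb : LipschitzWith clip b) (hσ : LipschitzWith clip σ)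
    (hh : LipschitzWith clip h)
    (cσ : ℝ) (hσbd : ∀ x, ‖σ x‖ ≤ cσ)
    (Φ : Pth T d → ℝ) (hΦc : Continuous Φ) (hΦb : ∃ C, ∀ η, |Φ η| ≤ C)
    (M : ℝ) (hM : 0 < M) :
    ∃ κ : ℝ, 0 < κ ∧
      ∀ (φ : ℝ → EuclideanSpace ℝ (Fin k)) (ψ : ℝ → EuclideanSpace ℝ (Fin m)),
        L2on T φ → L2on T ψ →
        2⁻¹ * ((∫ s in Set.Icc (0:ℝ) T, ‖φ s‖ ^ 2) + ∫ s in Set.Icc (0:ℝ) T, ‖ψ s‖ ^ 2) ≤ M →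
        ∀ ξφ : Pth T d, IsSol hT x₀ b σ φ ξφ →
          ((⨅ η : Pth T d,
              (((Hfun hT h η ξφ ψ + Φ η : ℝ) : EReal) + Jrate hT x₀ b σ η))
            = ⨅ η ∈ {η : Pth T d | Jrate hT x₀ b σ η ≤ ((κ : ℝ) : EReal)},
              (((Hfun hT h η ξφ ψ + Φ η : ℝ) : EReal) + Jrate hT x₀ b σ η)) ∧
          ((⨅ η : Pth T d,
              (((Hfun hT h η ξφ ψ : ℝ) : EReal) + Jrate hT x₀ b σ η))
            = ⨅ η ∈ {η : Pth T d | Jrate hT x₀ b σ η ≤ ((κ : ℝ) : EReal)},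
              (((Hfun hT h η ξφ ψ : ℝ) : EReal) + Jrate hT x₀ b σ η)) :=
  variational_inf_reduction_to_compact_general hT x₀ b σ h Φ hΦb M hM
end
end
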